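/- arXiv:1503.03229 — 2 statements merged into one kernel-verified Lean document; each statement's English description precedes it below -/
import Mathlib

section
/- The contraction of a Cohen–Macaulay simplicial complex is Cohen–Macaulay. -/
open Finset

/-- An abstract simplicial complex on vertex type `V`: a downward closed
family of finite subsets of `V`. -/
structure AbstractComplex (V : Type*) where
  faces : Set (Finset V)
  down_closed : ∀ {s t : Finset V}, s ∈ faces → t ⊆ s → t ∈ faces

namespace AbstractComplex

variable {V : Type*}

/-- A facet is a maximal face. -/
def IsFacet (Δ : AbstractComplex V) (s : Finset V) : Prop :=
  s ∈ Δ.faces ∧ ∀ t ∈ Δ.faces, s ⊆ t → s = t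

/-- A complex is pure if all facets have the same cardinality. -/
def IsPure (Δ : AbstractComplex V) : Prop :=
  ∀ s t : Finset V, Δ.IsFacet s → Δ.IsFacet t → s.card = t.card

/-- The link of a (potential) face `F`. -/
def link [DecidableEq V] (Δ : AbstractComplex V) (F : Finset V) : AbstractComplex V where
  faces := {G | G ∩ F = ∅ ∧ G ∪ F ∈ Δ.faces}
  down_closed := by
    rintro s t ⟨h1, h2⟩ hts
    refine ⟨subset_empty.mp ?_, Δ.down_closed h2 (union_subset_union hts subset_rfl)⟩
    exact h1 ▸ inter_subset_inter hts subset_rfl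

/-- The faces of cardinality `q` (i.e. dimension `q - 1`). -/
abbrev Face (Δ : AbstractComplex V) (q : ℕ) := {s : Finset V // s ∈ Δ.faces ∧ s.card = q}

/-- The simplicial boundary map on reduced chains with coefficients in `K`,
from chains spanned by faces of cardinality `q+1` to those spanned by faces of
cardinality `q`. -/
noncomputable def boundary (K : Type*) [Field K] [LinearOrder V]
    (Δ : AbstractComplex V) (q : ℕ) :
    (Δ.Face (q + 1) →₀ K) →ₗ[K] (Δ.Face q →₀ K) :=
  Finsupp.lsum K fun s => LinearMap.toSpanSingleton K _
    (∑ x ∈ s.1.attach,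
      ((-1 : K) ^ (s.1.filter (fun y => y < x.1)).card) •
        Finsupp.single (⟨s.1.erase x.1,
          Δ.down_closed s.2.1 (erase_subset _ _), by
            rw [card_erase_of_mem x.2, s.2.2]; omega⟩ : Δ.Face q) (1 : K))

/-- `Δ.RHTriv K i` says that the `i`-th reduced simplicial homology of `Δ`
with coefficients in `K` vanishes. -/
def RHTriv (K : Type*) [Field K] [LinearOrder V] (Δ : AbstractComplex V) : ℤ → Prop
  | Int.ofNat i =>
      LinearMap.ker (Δ.boundary K i) ≤ LinearMap.range (Δ.boundary K (i + 1))
  | Int.negSucc 0 => ⊤ ≤ LinearMap.range (Δ.boundary K 0)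
  | Int.negSucc (_ + 1) => True

/-- `Δ.dimLT i` means `i < dim Δ`. -/
def dimLT (Δ : AbstractComplex V) (i : ℤ) : Prop :=
  ∃ s ∈ Δ.faces, i + 2 ≤ (s.card : ℤ)

/-- Cohen–Macaulayness over `K`, via Reisner's criterion. -/
def IsCM (K : Type*) [Field K] [LinearOrder V] (Δ : AbstractComplex V) : Prop :=
  ∀ F ∈ Δ.faces, ∀ i : ℤ, (Δ.link F).dimLT i → (Δ.link F).RHTriv K i

/-- `CM_t`: pure, and the link of every face of cardinality at least `t`
is Cohen–Macaulay. -/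
def IsCMt (K : Type*) [Field K] [LinearOrder V] (t : ℕ) (Δ : AbstractComplex V) : Prop :=
  Δ.IsPure ∧ ∀ F ∈ Δ.faces, t ≤ F.card → IsCM K (Δ.link F)

/-- Buchsbaum-ness: pure and the reduced homology of the link of every nonempty
face vanishes below its dimension. -/
def IsBuchsbaum (K : Type*) [Field K] [LinearOrder V] (Δ : AbstractComplex V) : Prop :=
  Δ.IsPure ∧ ∀ G ∈ Δ.faces, G ≠ ∅ →
    ∀ i : ℤ, (Δ.link G).dimLT i → (Δ.link G).RHTriv K i

end AbstractComplex

/-- The expansion `F^α` of a finite vertex set. -/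
def expandSet {V : Type*} (α : V → ℕ) (F : Finset V) : Finset (Σ i, Fin (α i)) :=
  F.sigma fun _ => Finset.univ

namespace AbstractComplex

/-- The expansion `Δ^α` of a simplicial complex: the complex generated by the
expansions of the facets of `Δ`. -/
def expand {V : Type*} (Δ : AbstractComplex V) (α : V → ℕ) :
    AbstractComplex (Σ i, Fin (α i)) where
  faces := {σ | ∃ F, Δ.IsFacet F ∧ σ ⊆ expandSet α F}
  down_closed := fun ⟨F, hF, hsub⟩ hts => ⟨F, hF, hts.trans hsub⟩

end AbstractComplex

/-- A linear order on the expanded vertex set (lexicographic). -/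
noncomputable instance sigmaFinLinearOrder {V : Type*} [LinearOrder V] {α : V → ℕ} :
    LinearOrder (Σ i, Fin (α i)) :=
  LinearOrder.lift' (toLex : (Σ i, Fin (α i)) → Σₗ i, Fin (α i)) toLex.injective

namespace AbstractComplex

variable {V : Type*}

/-- Two vertices are equivalent iff they lie in exactly the same facets. -/
def contractSetoid (Δ : AbstractComplex V) : Setoid V where
  r x y := ∀ F : Finset V, Δ.IsFacet F → (x ∈ F ↔ y ∈ F)
  iseqv := ⟨fun _ _ _ => Iff.rfl, fun h F hF => (h F hF).symm,
    fun h1 h2 F hF => (h1 F hF).trans (h2 F hF)⟩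

/-- The contraction of `Δ`: the complex on the equivalence classes of vertices,
whose facets are the images of the facets of `Δ`. -/
def contraction (Δ : AbstractComplex V) : AbstractComplex (Quotient Δ.contractSetoid) where
  faces := {σ | ∃ F : Finset V, Δ.IsFacet F ∧
    ∀ y ∈ σ, ∃ x ∈ F, Quotient.mk Δ.contractSetoid x = y}
  down_closed := fun ⟨F, hF, h⟩ hts => ⟨F, hF, fun y hy => h y (hts hy)⟩

/-- The size of an equivalence class of vertices: the components of the vector
obtained from contraction. -/
noncomputable def classSize (Δ : AbstractComplex V) (y : Quotient Δ.contractSetoid) : ℕ :=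
  Nat.card {x : V // Quotient.mk Δ.contractSetoid x = y}

end AbstractComplex

noncomputable instance quotLinearOrder {V : Type*} [LinearOrder V] {s : Setoid V} :
    LinearOrder (Quotient s) :=
  LinearOrder.lift' Quotient.out Quotient.out_injective

/-!
Let `U` be the set of vertices whose class lies in a face `σ` of the contraction `Γ`. Choosing one
representative in each class identifies `link_Γ σ` with the subcomplex of `link_Δ U` spanned by the
representatives. Every other vertex `x` is dominated in `link_Δ U` by the representative `y` of its
class: `x` and `y` lie in the same facets, so every face through `x` extends by `y`. Deleting a
dominated vertex does not change reduced homology, because coning off with apex `y` is a chain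
homotopy from the identity to a map killing the faces through `x`. Hence `link_Γ σ` has the reduced
homology of `link_Δ U`, which vanishes below its dimension since `Δ` is Cohen–Macaulay.

Chains of every complex on `V` are taken inside the chain complex of the full simplex on `V`, where
faces are plain finite sets.
-/

theorem Finsupp.linearCombination_mem_of_mem_supported {α M R : Type*} [Semiring R]
    [AddCommMonoid M] [Module R M] {f : α → M} {A : Set α} {P : Submodule R M}
    (hf : ∀ a ∈ A, f a ∈ P) {c : α →₀ R} (hc : c ∈ Finsupp.supported R R A) :
    Finsupp.linearCombination R f c ∈ P := by
  refine Submodule.span_le.2 ?_ ((Finsupp.span_image_eq_map_linearCombination (v := f) R A).symm ▸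
    Submodule.mem_map_of_mem hc)
  rintro _ ⟨a, ha, rfl⟩
  exact hf a ha

namespace AbstractComplex

open Finsupp

section SimplexChains

variable {V : Type*} [LinearOrder V] (K : Type*) [CommRing K]

def incidence (s : Finset V) (v : V) : K := (-1) ^ #{z ∈ s | z < v}

variable {K}

theorem incidence_mul_self (s : Finset V) (v : V) : incidence K s v * incidence K s v = 1 := by
  rw [incidence, ← mul_pow, neg_one_mul, neg_neg, one_pow]

theorem incidence_insert {s : Finset V} {y : V} (hy : y ∉ s) (u : V) :
    incidence K (insert y s) u = (if y < u then -1 else 1) * incidence K s u := by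
  rw [incidence, incidence, filter_insert]
  split_ifs with h
  · rw [card_insert_of_notMem (fun h' => hy (mem_filter.1 h').1), pow_succ, mul_comm]
  · rw [one_mul]

theorem incidence_erase {s : Finset V} {v : V} (hv : v ∈ s) (u : V) :
    incidence K (s.erase v) u = (if v < u then -1 else 1) * incidence K s u := by
  conv_rhs => rw [← insert_erase hv, incidence_insert (notMem_erase v s), ← mul_assoc]
  split_ifs <;> norm_num

theorem ite_lt_add_ite_lt {u v : V} (h : u ≠ v) :
    ((if u < v then -1 else 1) + (if v < u then -1 else 1) : K) = 0 := by
  rcases h.lt_or_gt with h | h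
  · rw [if_pos h, if_neg h.asymm]; ring
  · rw [if_neg h.asymm, if_pos h]; ring

variable (K)

noncomputable def faceBoundary (s : Finset V) : Finset V →₀ K :=
  ∑ v ∈ s, incidence K s v • single (s.erase v) 1

noncomputable def simplexBoundary : (Finset V →₀ K) →ₗ[K] (Finset V →₀ K) :=
  linearCombination K (faceBoundary K)

variable {K}

theorem simplexBoundary_single (s : Finset V) (k : K) :
    simplexBoundary K (single s k) = k • faceBoundary K s :=
  linearCombination_single K k s

theorem simplexBoundary_faceBoundary (s : Finset V) :
    simplexBoundary K (faceBoundary K s) = 0 := by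
  simp only [faceBoundary, map_sum, map_smul, simplexBoundary_single, Finset.smul_sum,
    smul_smul, sum_sigma']
  refine sum_involution (fun p _ => ⟨p.2, p.1⟩) (fun ⟨v, u⟩ hp => ?_)
    (fun ⟨v, u⟩ hp _ => ?_) (fun ⟨v, u⟩ hp => ?_) (fun _ _ => rfl)
  all_goals obtain ⟨hv, hu⟩ : v ∈ s ∧ u ∈ s.erase v := mem_sigma.1 hp
  · have huv : u ≠ v := ne_of_mem_erase hu
    rw [erase_right_comm, ← add_smul, incidence_erase hv, incidence_erase (mem_of_mem_erase hu)]
    refine (congrArg (· • _) ?_).trans (zero_smul K _)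
    linear_combination (incidence K s v * incidence K s u) * ite_lt_add_ite_lt (K := K) huv.symm
  · exact fun h => ne_of_mem_erase hu (congrArg Sigma.fst h)
  · exact mem_sigma.2 ⟨mem_of_mem_erase hu, mem_erase.2 ⟨(ne_of_mem_erase hu).symm, hv⟩⟩

theorem simplexBoundary_simplexBoundary (c : Finset V →₀ K) :
    simplexBoundary K (simplexBoundary K c) = 0 := by
  induction c using Finsupp.induction_linear with
  | zero => simp
  | add f g hf hg => rw [map_add, map_add, hf, hg, add_zero]
  | single s k => rw [simplexBoundary_single, map_smul, simplexBoundary_faceBoundary, smul_zero]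

end SimplexChains

section Chains

variable {V : Type*} {K : Type*} [CommRing K] {Λ : AbstractComplex V}

variable (K) in
def chains (Λ : AbstractComplex V) (q : ℕ) : Submodule K (Finset V →₀ K) :=
  supported K K {s | s ∈ Λ.faces ∧ s.card = q}

variable [LinearOrder V]

theorem faceBoundary_mem_chains {s : Finset V} {q : ℕ} (hs : s ∈ Λ.faces)
    (hq : s.card = q + 1) :
    faceBoundary K s ∈ Λ.chains K q :=
  Submodule.sum_mem _ fun v hv => Submodule.smul_mem _ _ <| single_mem_supported K 1
    ⟨Λ.down_closed hs (erase_subset v s), by rw [card_erase_of_mem hv, hq]; rfl⟩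

theorem simplexBoundary_mem_chains {q : ℕ} {c : Finset V →₀ K}
    (hc : c ∈ Λ.chains K (q + 1)) :
    simplexBoundary K c ∈ Λ.chains K q :=
  linearCombination_mem_of_mem_supported (fun _ hs => faceBoundary_mem_chains hs.1 hs.2) hc

end Chains

section Homology

variable {V : Type*} {K : Type*} [Field K] {Λ : AbstractComplex V}

variable (K) in
noncomputable def toSimplexChains (Λ : AbstractComplex V) (q : ℕ) :
    (Λ.Face q →₀ K) →ₗ[K] (Finset V →₀ K) :=
  lmapDomain K K Subtype.val

theorem toSimplexChains_injective (q : ℕ) : Function.Injective (Λ.toSimplexChains K q) :=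
  mapDomain_injective Subtype.val_injective

theorem range_toSimplexChains (q : ℕ) :
    LinearMap.range (Λ.toSimplexChains K q) = Λ.chains K q := by
  rw [toSimplexChains, LinearMap.range_eq_map, ← supported_univ, lmapDomain_supported,
    Set.image_univ, Subtype.range_coe_subtype]
  rfl

variable [LinearOrder V]

theorem toSimplexChains_boundary (q : ℕ) (c : Λ.Face (q + 1) →₀ K) :
    Λ.toSimplexChains K q (Λ.boundary K q c) =
      simplexBoundary K (Λ.toSimplexChains K (q + 1) c) := by
  induction c using Finsupp.induction_linear with
  | zero => simp
  | add f g hf hg => rw [map_add, map_add, hf, hg, map_add, map_add]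
  | single s k =>
    simp only [toSimplexChains, boundary, smul_single, smul_eq_mul, mul_one, coe_lsum,
      LinearMap.toSpanSingleton_apply, zero_smul, sum_single_index, map_smul, map_sum,
      lmapDomain_apply, mapDomain_single, simplexBoundary_single, faceBoundary, incidence]
    exact congrArg _ <|
      sum_attach s.1 fun v => single (s.1.erase v) ((-1 : K) ^ #{z ∈ s.1 | z < v})

theorem rhTriv_natCast_iff {n : ℕ} :
    Λ.RHTriv K n ↔ Λ.chains K (n + 1) ⊓ LinearMap.ker (simplexBoundary K) ≤
      (Λ.chains K (n + 2)).map (simplexBoundary K) := by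
  simp only [← range_toSimplexChains, RHTriv]
  constructor
  · intro h z hz
    obtain ⟨⟨c, rfl⟩, hz⟩ := Submodule.mem_inf.1 hz
    rw [LinearMap.mem_ker, ← toSimplexChains_boundary, ← map_zero (Λ.toSimplexChains K n),
      (toSimplexChains_injective n).eq_iff] at hz
    obtain ⟨d, rfl⟩ := h hz
    exact ⟨_, LinearMap.mem_range_self _ d, (toSimplexChains_boundary _ d).symm⟩
  · intro h c hc
    obtain ⟨_, ⟨d, rfl⟩, hd⟩ := h <| Submodule.mem_inf.2 ⟨LinearMap.mem_range_self _ c, by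
      rw [LinearMap.mem_ker, ← toSimplexChains_boundary, LinearMap.mem_ker.1 hc, map_zero]⟩
    rw [← toSimplexChains_boundary] at hd
    exact ⟨d, toSimplexChains_injective _ hd⟩

end Homology

section Domination

variable {V : Type*} {Λ : AbstractComplex V} {x y : V}

def deletion (Λ : AbstractComplex V) (S : Finset V) : AbstractComplex V where
  faces := {s | s ∈ Λ.faces ∧ Disjoint s S}
  down_closed h hts := ⟨Λ.down_closed h.1 hts, h.2.mono_left hts⟩

theorem deletion_empty (Λ : AbstractComplex V) : Λ.deletion ∅ = Λ := by
  cases Λ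
  simp [deletion]

variable [DecidableEq V]

def IsDominatedBy (Λ : AbstractComplex V) (x y : V) : Prop :=
  ∀ s ∈ Λ.faces, x ∈ s → insert y s ∈ Λ.faces

theorem IsDominatedBy.deletion {S : Finset V} (h : Λ.IsDominatedBy x y) (hy : y ∉ S) :
    (Λ.deletion S).IsDominatedBy x y :=
  fun s hs hx => ⟨h s hs.1 hx, disjoint_insert_left.2 ⟨hy, hs.2⟩⟩

theorem IsDominatedBy.link {F : Finset V} (h : Λ.IsDominatedBy x y) (hF : y ∈ F → x ∈ F) :
    (Λ.link F).IsDominatedBy x y := by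
  rintro s ⟨hsF, hs⟩ hx
  have hxF : x ∉ F := fun h => eq_empty_iff_forall_notMem.1 hsF x (mem_inter.2 ⟨hx, h⟩)
  refine ⟨?_, ?_⟩
  · rw [insert_inter_of_notMem (fun h => hxF (hF h)), hsF]
  · rw [insert_union]
    exact h _ hs (mem_union_left _ hx)

end Domination

section Cone

variable {V : Type*} [LinearOrder V] {K : Type*} [CommRing K] {Λ : AbstractComplex V} {x y : V}

variable (K) in
noncomputable def coneFace (x y : V) (s : Finset V) : Finset V →₀ K :=
  if x ∈ s ∧ y ∉ s then incidence K s y • single (insert y s) 1 else 0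

variable (K) in
/-- When `x` is dominated by `y`, a chain homotopy from the identity to a map killing every face
through `x` (see `simplexBoundary_coneHomotopy_add_sub_mem`). -/
noncomputable def coneHomotopy (x y : V) : (Finset V →₀ K) →ₗ[K] (Finset V →₀ K) :=
  linearCombination K (coneFace K x y)

theorem coneHomotopy_single (s : Finset V) (k : K) :
    coneHomotopy K x y (single s k) = k • coneFace K x y s :=
  linearCombination_single K k s

theorem coneHomotopy_eq_zero {c : Finset V →₀ K} (hc : c ∈ supported K K {s | x ∉ s}) :
    coneHomotopy K x y c = 0 :=
  (Submodule.mem_bot K).1 <| linearCombination_mem_of_mem_supported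
    (fun _ hs => by rw [coneFace, if_neg fun h => hs h.1]; exact Submodule.zero_mem ⊥) hc

theorem faceBoundary_mem_supported {s : Finset V} (hx : x ∉ s) :
    faceBoundary K s ∈ supported K K {t | x ∉ t} :=
  Submodule.sum_mem _ fun _ _ => Submodule.smul_mem _ _ <|
    single_mem_supported K 1 fun h => hx (mem_of_mem_erase h)

theorem coneHomotopy_faceBoundary_of_mem (hxy : x ≠ y) {s : Finset V} (hx : x ∈ s)
    (hy : y ∈ s) :
    coneHomotopy K x y (faceBoundary K s) = single s 1 := by
  rw [faceBoundary, map_sum, sum_eq_single_of_mem y hy]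
  · rw [map_smul, coneHomotopy_single, one_smul, coneFace,
      if_pos ⟨mem_erase.2 ⟨hxy, hx⟩, notMem_erase y s⟩, insert_erase hy, smul_smul,
      incidence_erase hy, if_neg (lt_irrefl y), one_mul, incidence_mul_self, one_smul]
  · intro v _ hvy
    rw [map_smul, coneHomotopy_single, one_smul, coneFace,
      if_neg fun h => h.2 (mem_erase.2 ⟨hvy.symm, hy⟩), smul_zero]

theorem simplexBoundary_coneFace_add_sub_mem (hxy : x ≠ y) {s : Finset V} (hx : x ∈ s)
    (hy : y ∉ s) :
    simplexBoundary K (coneFace K x y s) + coneHomotopy K x y (faceBoundary K s) - single s 1 ∈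
      supported K K {t | x ∉ t} := by
  have hcone : simplexBoundary K (coneFace K x y s) = single s 1 + ∑ v ∈ s,
      incidence K s y • incidence K (insert y s) v • single ((insert y s).erase v) 1 := by
    rw [coneFace, if_pos ⟨hx, hy⟩, map_smul, simplexBoundary_single, one_smul, faceBoundary,
      sum_insert hy, erase_insert hy, incidence_insert hy, if_neg (lt_irrefl y), one_mul,
      smul_add, smul_smul, incidence_mul_self, one_smul, Finset.smul_sum]
  rw [hcone, faceBoundary, map_sum, add_sub_right_comm, add_sub_cancel_left, ← sum_add_distrib]
  refine Submodule.sum_mem _ fun v hv => ?_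
  rw [map_smul, coneHomotopy_single, one_smul]
  obtain rfl | hvx := eq_or_ne v x
  · rw [coneFace, if_neg fun h => notMem_erase v s h.1, smul_zero, add_zero]
    exact Submodule.smul_mem _ _ <| Submodule.smul_mem _ _ <|
      single_mem_supported K 1 (notMem_erase v _)
  · have hyv : y ≠ v := fun h => hy (h ▸ hv)
    rw [coneFace, if_pos ⟨mem_erase.2 ⟨hvx.symm, hx⟩, fun h => hy (mem_of_mem_erase h)⟩,
      erase_insert_of_ne hyv, smul_smul, smul_smul, ← add_smul, incidence_insert hy,
      incidence_erase hv]
    convert Submodule.zero_mem (supported K K {t | x ∉ t})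
    refine (congrArg (· • single (insert y (s.erase v)) (1 : K)) ?_).trans (zero_smul K _)
    linear_combination (incidence K s y * incidence K s v) * ite_lt_add_ite_lt (K := K) hyv

theorem simplexBoundary_coneHomotopy_add_sub_mem (hxy : x ≠ y) (c : Finset V →₀ K) :
    simplexBoundary K (coneHomotopy K x y c) + coneHomotopy K x y (simplexBoundary K c) - c ∈
      supported K K {t | x ∉ t} := by
  induction c using Finsupp.induction_linear with
  | zero => simp
  | add f g hf hg =>
    convert add_mem hf hg using 1
    simp only [map_add]
    abel
  | single s k =>
    rw [coneHomotopy_single, simplexBoundary_single, map_smul, map_smul,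
      ← smul_single_one, ← smul_add, ← smul_sub]
    refine Submodule.smul_mem _ k ?_
    by_cases hx : x ∈ s
    · by_cases hy : y ∈ s
      · rw [coneFace, if_neg fun h => h.2 hy, map_zero, zero_add,
          coneHomotopy_faceBoundary_of_mem hxy hx hy, sub_self]
        exact Submodule.zero_mem _
      · exact simplexBoundary_coneFace_add_sub_mem hxy hx hy
    · rw [coneFace, if_neg fun h => hx h.1, map_zero, zero_add,
        coneHomotopy_eq_zero (faceBoundary_mem_supported hx), zero_sub]
      exact neg_mem (single_mem_supported K 1 hx)

theorem IsDominatedBy.coneHomotopy_mem_chains (h : Λ.IsDominatedBy x y) {q : ℕ}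
    {c : Finset V →₀ K} (hc : c ∈ Λ.chains K q) :
    coneHomotopy K x y c ∈ Λ.chains K (q + 1) := by
  refine linearCombination_mem_of_mem_supported (fun s hs => ?_) hc
  rw [coneFace]
  split_ifs with hs'
  · exact Submodule.smul_mem _ _ <| single_mem_supported K 1
      ⟨h s hs.1 hs'.1, by rw [card_insert_of_notMem hs'.2, hs.2]⟩
  · exact Submodule.zero_mem _

end Cone

section DominatedVertex

variable {V : Type*} [LinearOrder V] {K : Type*} [Field K] {Λ Λ' : AbstractComplex V} {x y : V}

theorem RHTriv.of_isDominatedBy (hxy : x ≠ y) (hdom : Λ.IsDominatedBy x y)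
    (hΛ' : Λ'.faces = {s | s ∈ Λ.faces ∧ x ∉ s}) {n : ℕ} (h : Λ.RHTriv K n) :
    Λ'.RHTriv K n := by
  have hchains (q : ℕ) : Λ'.chains K q = Λ.chains K q ⊓ supported K K {s | x ∉ s} := by
    rw [chains, chains, ← supported_inter, hΛ']
    congr 1
    ext s
    simp only [Set.mem_ofPred_eq, Set.mem_inter_iff]
    tauto
  rw [rhTriv_natCast_iff] at h ⊢
  intro z hz
  obtain ⟨hz, hbz⟩ := Submodule.mem_inf.1 hz
  obtain ⟨hzΛ, hzx⟩ := Submodule.mem_inf.1 (hchains _ ▸ hz)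
  obtain ⟨w, hw, rfl⟩ := h (Submodule.mem_inf.2 ⟨hzΛ, hbz⟩)
  -- `w - ∂(cone w)` still bounds `z`, and it avoids `x` because `z` does.
  refine ⟨w - simplexBoundary K (coneHomotopy K x y w),
    hchains _ ▸ Submodule.mem_inf.2 ⟨?_, ?_⟩, ?_⟩
  · exact sub_mem hw (simplexBoundary_mem_chains (hdom.coneHomotopy_mem_chains hw))
  · have := neg_mem (simplexBoundary_coneHomotopy_add_sub_mem hxy w)
    rwa [coneHomotopy_eq_zero hzx, add_zero, neg_sub] at this
  · rw [map_sub, simplexBoundary_simplexBoundary, sub_zero]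

theorem RHTriv.deletion {S : Finset V} (hS : ∀ x ∈ S, ∃ y ∉ S, Λ.IsDominatedBy x y)
    {n : ℕ} (h : Λ.RHTriv K n) : (Λ.deletion S).RHTriv K n := by
  induction S using Finset.induction_on with
  | empty => rwa [deletion_empty]
  | insert a S _ ih =>
    obtain ⟨y, hy, hdom⟩ := hS a (mem_insert_self a S)
    refine RHTriv.of_isDominatedBy (ne_of_mem_of_not_mem (mem_insert_self a S) hy)
      (hdom.deletion fun h => hy (mem_insert_of_mem h)) ?_ (ih fun x hx => ?_)
    · ext s
      simp only [AbstractComplex.deletion, Set.mem_ofPred_eq, disjoint_insert_right]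
      tauto
    · obtain ⟨y', hy', hdom'⟩ := hS x (mem_insert_of_mem hx)
      exact ⟨y', fun h => hy' (mem_insert_of_mem h), hdom'⟩

end DominatedVertex

section Image

variable {V₁ V₂ : Type*} {K : Type*} {e : V₁ → V₂} {Λ₁ : AbstractComplex V₁}
  {Λ₂ : AbstractComplex V₂}

section CommRing

variable [CommRing K]

theorem chains_eq_map [DecidableEq V₂] (he : Function.Injective e)
    (hface : ∀ s, s ∈ Λ₁.faces ↔ s.image e ∈ Λ₂.faces)
    (hrange : ∀ t ∈ Λ₂.faces, ↑t ⊆ Set.range e) (q : ℕ) :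
    Λ₂.chains K q = (Λ₁.chains K q).map (lmapDomain K K (image e)) := by
  rw [chains, chains, lmapDomain_supported]
  congr 1
  ext t
  constructor
  · rintro ⟨ht, hq⟩
    obtain ⟨s, -, rfl⟩ := subset_set_image_iff.1 (Set.image_univ ▸ hrange t ht)
    exact ⟨s, ⟨(hface s).2 ht, card_image_of_injective _ he ▸ hq⟩, rfl⟩
  · rintro ⟨s, ⟨hs, hq⟩, rfl⟩
    exact ⟨(hface s).1 hs, (card_image_of_injective _ he).trans hq⟩

variable [LinearOrder V₁] [LinearOrder V₂]

theorem incidence_image (he : StrictMono e) (s : Finset V₁) (v : V₁) :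
    incidence K (s.image e) (e v) = incidence K s v := by
  rw [incidence, incidence, filter_image, card_image_of_injective _ he.injective]
  simp only [he.lt_iff_lt]

theorem simplexBoundary_lmapDomain_image (he : StrictMono e) (c : Finset V₁ →₀ K) :
    simplexBoundary K (lmapDomain K K (image e) c) =
      lmapDomain K K (image e) (simplexBoundary K c) := by
  induction c using Finsupp.induction_linear with
  | zero => simp
  | add f g hf hg => rw [map_add, map_add, hf, hg, map_add, map_add]
  | single s k =>
    rw [lmapDomain_apply, mapDomain_single, simplexBoundary_single, simplexBoundary_single,
      map_smul, faceBoundary, faceBoundary, map_sum, sum_image he.injective.injOn]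
    congr 1
    refine sum_congr rfl fun v _ => ?_
    rw [map_smul, lmapDomain_apply, mapDomain_single, incidence_image he,
      image_erase he.injective]

end CommRing

theorem RHTriv.of_image [LinearOrder V₁] [LinearOrder V₂] [Field K] (he : StrictMono e)
    (hface : ∀ s, s ∈ Λ₁.faces ↔ s.image e ∈ Λ₂.faces)
    (hrange : ∀ t ∈ Λ₂.faces, ↑t ⊆ Set.range e) {n : ℕ} (h : Λ₂.RHTriv K n) :
    Λ₁.RHTriv K n := by
  rw [rhTriv_natCast_iff, chains_eq_map he.injective hface hrange,
    chains_eq_map he.injective hface hrange] at h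
  rw [rhTriv_natCast_iff]
  intro z hz
  obtain ⟨hz, hbz⟩ := Submodule.mem_inf.1 hz
  obtain ⟨_, ⟨w, hw, rfl⟩, hbw⟩ := h <| Submodule.mem_inf.2 ⟨Submodule.mem_map_of_mem hz,
    by rw [LinearMap.mem_ker, simplexBoundary_lmapDomain_image he, LinearMap.mem_ker.1 hbz,
      map_zero]⟩
  rw [simplexBoundary_lmapDomain_image he] at hbw
  exact ⟨w, hw, mapDomain_injective (image_injective he.injective) hbw⟩

end Image

section NegOne

variable {V : Type*} [LinearOrder V] {K : Type*} [Field K]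

theorem rhTriv_neg_one_of_dimLT {Λ : AbstractComplex V} (h : Λ.dimLT (-1)) :
    Λ.RHTriv K (-1) := by
  obtain ⟨s, hs, hcard⟩ := h
  obtain ⟨v, hv⟩ : s.Nonempty := card_pos.1 (by omega)
  let vertex : Λ.Face 1 :=
    ⟨{v}, Λ.down_closed hs (singleton_subset_iff.2 hv), card_singleton v⟩
  let empty : Λ.Face 0 := ⟨∅, Λ.down_closed hs (empty_subset s), card_empty⟩
  have hempty (a : Λ.Face 0) : a = empty := Subtype.ext (card_eq_zero.1 a.2.2)
  rintro c -
  refine ⟨single vertex (c empty), ?_⟩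
  ext a
  rw [hempty a]
  simp only [boundary, lsum_single, LinearMap.toSpanSingleton_apply, Finsupp.smul_apply, vertex]
  rw [sum_eq_single_of_mem ⟨v, mem_singleton_self v⟩ (mem_attach _ _)
    fun b _ hb => (hb (Subtype.ext (mem_singleton.1 b.2))).elim]
  simp [empty, filter_singleton]

end NegOne

section Contraction

variable {V : Type*} {Δ : AbstractComplex V}

theorem exists_isFacet_superset [Finite V] {s : Finset V} (hs : s ∈ Δ.faces) :
    ∃ F, Δ.IsFacet F ∧ s ⊆ F := by
  obtain ⟨F, ⟨hF, hsF⟩, hmax⟩ := Set.Finite.exists_maximalFor (fun t : Finset V => t.card)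
    {t | t ∈ Δ.faces ∧ s ⊆ t} (Set.toFinite _) ⟨s, hs, subset_rfl⟩
  exact ⟨F, ⟨hF, fun t ht hFt => eq_of_subset_of_card_le hFt
    (hmax ⟨ht, hsF.trans hFt⟩ (card_le_card hFt))⟩, hsF⟩

variable [LinearOrder V]

theorem isDominatedBy_of_mk_eq [Finite V] {x y : V}
    (h : Quotient.mk Δ.contractSetoid x = Quotient.mk Δ.contractSetoid y) :
    Δ.IsDominatedBy x y := by
  intro s hs hx
  obtain ⟨F, hF, hsF⟩ := exists_isFacet_superset hs
  exact Δ.down_closed hF.1 (insert_subset ((Quotient.exact h F hF).1 (hsF hx)) hsF)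

theorem image_mk_mem_contraction_iff [Finite V] {s : Finset V} :
    s.image (Quotient.mk Δ.contractSetoid) ∈ Δ.contraction.faces ↔ s ∈ Δ.faces := by
  constructor
  · rintro ⟨F, hF, hcover⟩
    refine Δ.down_closed hF.1 fun v hv => ?_
    obtain ⟨x, hx, hxv⟩ := hcover _ (mem_image_of_mem _ hv)
    exact (Quotient.exact hxv F hF).1 hx
  · intro hs
    obtain ⟨F, hF, hsF⟩ := exists_isFacet_superset hs
    refine ⟨F, hF, fun y hy => ?_⟩
    obtain ⟨x, hx, rfl⟩ := mem_image.1 hy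
    exact ⟨x, hsF hx, rfl⟩

variable [Fintype V]

noncomputable def classUnion (Δ : AbstractComplex V) (σ : Finset (Quotient Δ.contractSetoid)) :
    Finset V :=
  {v | Quotient.mk Δ.contractSetoid v ∈ σ}

theorem mem_classUnion {σ : Finset (Quotient Δ.contractSetoid)} {v : V} :
    v ∈ Δ.classUnion σ ↔ Quotient.mk Δ.contractSetoid v ∈ σ := by
  simp [classUnion]

theorem image_mk_classUnion (σ : Finset (Quotient Δ.contractSetoid)) :
    (Δ.classUnion σ).image (Quotient.mk Δ.contractSetoid) = σ := by
  ext y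
  simp only [mem_image, mem_classUnion]
  exact ⟨fun ⟨_, hv, hvy⟩ => hvy ▸ hv,
    fun hy => ⟨y.out, y.out_eq.symm ▸ hy, y.out_eq⟩⟩

theorem classUnion_mem_faces {σ : Finset (Quotient Δ.contractSetoid)}
    (hσ : σ ∈ Δ.contraction.faces) : Δ.classUnion σ ∈ Δ.faces :=
  image_mk_mem_contraction_iff.1 ((image_mk_classUnion σ).symm ▸ hσ)

theorem mem_link_contraction_iff {σ τ : Finset (Quotient Δ.contractSetoid)} :
    τ ∈ (Δ.contraction.link σ).faces ↔
      τ.image Quotient.out ∈ (Δ.link (Δ.classUnion σ)).faces := by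
  have hτ : (τ.image Quotient.out).image (Quotient.mk Δ.contractSetoid) = τ := by
    simp [image_image, Function.comp_def]
  simp only [link, Set.mem_ofPred_eq]
  rw [← image_mk_mem_contraction_iff (s := τ.image Quotient.out ∪ Δ.classUnion σ),
    image_union, hτ, image_mk_classUnion]
  refine and_congr_left' ?_
  simp [eq_empty_iff_forall_notMem, mem_classUnion]

theorem dimLT_link_classUnion {σ : Finset (Quotient Δ.contractSetoid)} {i : ℤ}
    (h : (Δ.contraction.link σ).dimLT i) : (Δ.link (Δ.classUnion σ)).dimLT i := by
  obtain ⟨τ, hτ, hcard⟩ := h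
  exact ⟨τ.image Quotient.out, mem_link_contraction_iff.1 hτ,
    by rwa [card_image_of_injective _ Quotient.out_injective]⟩

theorem RHTriv.link_contraction {K : Type*} [Field K] {σ : Finset (Quotient Δ.contractSetoid)}
    {n : ℕ} (h : (Δ.link (Δ.classUnion σ)).RHTriv K n) :
    (Δ.contraction.link σ).RHTriv K n := by
  let S : Finset V := {v | (Quotient.mk Δ.contractSetoid v).out ≠ v}
  -- `Quotient.out` is strictly monotone by the definition of `quotLinearOrder`.
  refine RHTriv.of_image (Λ₁ := Δ.contraction.link σ)
    (Λ₂ := (Δ.link (Δ.classUnion σ)).deletion S) (e := Quotient.out) (fun _ _ h => h)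
    (fun τ => ?_) ?_ (RHTriv.deletion (fun x _ => ?_) h)
  · rw [mem_link_contraction_iff]
    refine (and_iff_left (disjoint_left.2 fun v hv hvS => ?_)).symm
    obtain ⟨y, -, rfl⟩ := mem_image.1 hv
    simp [S] at hvS
  · rintro t ⟨-, ht⟩ v hv
    refine ⟨Quotient.mk Δ.contractSetoid v, not_not.1 fun hc => disjoint_left.1 ht hv ?_⟩
    simpa [S] using hc
  · refine ⟨Quotient.out (Quotient.mk _ x), by simp [S],
      (isDominatedBy_of_mk_eq (Quotient.out_eq _).symm).link ?_⟩
    rw [mem_classUnion, mem_classUnion, Quotient.out_eq]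
    exact id

end Contraction

end AbstractComplex

/-- the contraction of a Cohen–Macaulay simplicial complex is
Cohen–Macaulay. -/
theorem contraction_cm (K : Type*) [Field K] {V : Type*} [Fintype V] [LinearOrder V]
    (Δ : AbstractComplex V) (h : AbstractComplex.IsCM K Δ) :
    AbstractComplex.IsCM K Δ.contraction := by
  intro σ hσ i hdim
  rcases i with n | _ | _
  · exact AbstractComplex.RHTriv.link_contraction
      (h _ (AbstractComplex.classUnion_mem_faces hσ) n
        (AbstractComplex.dimLT_link_classUnion hdim))
  · exact AbstractComplex.rhTriv_neg_one_of_dimLT hdim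
  · trivial
end

section
/- If Γ is the contraction of Δ by α, then the expansion Γ^α is isomorphic to Δ as a simplicial complex (there is a bijection of vertex sets carrying faces to faces in both directions). -/
open Finset

/-!
Every facet of `Δ` is a union of equivalence classes, so a set of vertices lies in a facet of `Δ`
exactly when its set of classes lies in the image of that facet, i.e. is a face of the contraction.
Enumerating each class by `Fin` of its size identifies the vertices of the expansion with `V`,
compatibly with the map to the classes; under this identification faces of the expansion are
the sets whose classes form a face of the contraction.
-/

namespace AbstractComplex

variable {V : Type*}

theorem isFacet_iff_maximal (Δ : AbstractComplex V) (F : Finset V) :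
    Δ.IsFacet F ↔ Maximal (· ∈ Δ.faces) F :=
  ⟨fun hF => ⟨hF.1, fun t ht hFt => (hF.2 t ht hFt).ge⟩,
    fun hF => ⟨hF.1, fun _ ht hFt => le_antisymm hFt (hF.2 ht hFt)⟩⟩

theorem mem_faces_iff_exists_isFacet [Finite V] (Δ : AbstractComplex V) (s : Finset V) :
    s ∈ Δ.faces ↔ ∃ F, Δ.IsFacet F ∧ s ⊆ F := by
  refine ⟨fun hs => ?_, fun ⟨F, hF, hsF⟩ => Δ.down_closed hF.1 hsF⟩
  obtain ⟨F, hsF, hF⟩ := Finite.exists_le_maximal (p := (· ∈ Δ.faces)) hs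
  exact ⟨F, (Δ.isFacet_iff_maximal F).mpr hF, hsF⟩

theorem subset_expandSet_iff [DecidableEq V] {α : V → ℕ} {σ : Finset (Σ i, Fin (α i))}
    {F : Finset V} : σ ⊆ expandSet α F ↔ σ.image Sigma.fst ⊆ F := by
  simp [expandSet, Finset.subset_iff, Sigma.forall]

theorem mem_expand_faces_iff [Finite V] [DecidableEq V] (Δ : AbstractComplex V) (α : V → ℕ)
    (σ : Finset (Σ i, Fin (α i))) :
    σ ∈ (Δ.expand α).faces ↔ σ.image Sigma.fst ∈ Δ.faces := by
  show (∃ F, Δ.IsFacet F ∧ σ ⊆ expandSet α F) ↔ _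
  simp only [subset_expandSet_iff, mem_faces_iff_exists_isFacet]

theorem image_mk_mem_contraction_faces_iff [Finite V] (Δ : AbstractComplex V)
    [DecidableEq (Quotient Δ.contractSetoid)] (s : Finset V) :
    s.image (Quotient.mk Δ.contractSetoid) ∈ Δ.contraction.faces ↔ s ∈ Δ.faces := by
  rw [Δ.mem_faces_iff_exists_isFacet s]
  refine ⟨fun ⟨F, hF, hsF⟩ => ⟨F, hF, fun v hv => ?_⟩,
    fun ⟨F, hF, hsF⟩ => ⟨F, hF, fun y hy => ?_⟩⟩
  · obtain ⟨x, hx, hxv⟩ := hsF _ (mem_image_of_mem _ hv)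
    exact (Quotient.exact hxv F hF).mp hx
  · obtain ⟨v, hv, rfl⟩ := mem_image.mp hy
    exact ⟨v, hsF hv, rfl⟩

end AbstractComplex

noncomputable def Equiv.sigmaFinFiber {V W : Type*} [Finite V] (f : V → W) :
    (Σ y : W, Fin (Nat.card {x // f x = y})) ≃ V :=
  (Equiv.sigmaCongrRight fun _ => (Finite.equivFin _).symm).trans (Equiv.sigmaFiberEquiv f)

theorem Equiv.apply_sigmaFinFiber {V W : Type*} [Finite V] (f : V → W)
    (p : Σ y : W, Fin (Nat.card {x // f x = y})) : f (Equiv.sigmaFinFiber f p) = p.1 :=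
  ((Finite.equivFin _).symm p.2).2

/-- if `Γ` is the contraction of `Δ` by `α`, then `Γ^α ≅ Δ`:
there is a bijection of vertex sets carrying faces to faces in both directions. -/
theorem expand_contraction_iso {V : Type*} [Fintype V] [DecidableEq V]
    (Δ : AbstractComplex V) :
    ∃ e : (Σ y : Quotient Δ.contractSetoid, Fin (Δ.classSize y)) ≃ V,
      ∀ σ : Finset (Σ y : Quotient Δ.contractSetoid, Fin (Δ.classSize y)),
        σ ∈ (Δ.contraction.expand Δ.classSize).faces ↔ σ.image e ∈ Δ.faces := by
  classical
  obtain ⟨e, he⟩ : ∃ e : (Σ y : Quotient Δ.contractSetoid, Fin (Δ.classSize y)) ≃ V,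
      ∀ p, Quotient.mk _ (e p) = p.1 :=
    ⟨Equiv.sigmaFinFiber _, Equiv.apply_sigmaFinFiber _⟩
  refine ⟨e, fun σ => ?_⟩
  have hclass : (σ.image e).image (Quotient.mk _) = σ.image Sigma.fst := by
    rw [image_image]
    exact image_congr fun p _ => he p
  rw [AbstractComplex.mem_expand_faces_iff, ← hclass,
    AbstractComplex.image_mk_mem_contraction_faces_iff]
end
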